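/- arXiv:2506.17271 — 2 statements merged into one kernel-verified Lean document; each statement's English description precedes it below -/
import Mathlib

section
/- Let h be a positive integer and let y_1, ..., y_n be natural numbers such that (1) the items y_1, ..., y_n can be packed into m bins each of capacity h, and (2) n + \sum_{i=1}^n y_i < m·h. Then the items y_1+1, ..., y_n+1 can be packed into m bins each of capacity h + \sqrt{h}. -/
open Finset

/-- Lemma 1 (camion crous): if items `y` fit into `m` bins of capacity `h` and
`n + ∑ y < m * h`, then items `y + 1` fit into `m` bins of capacity `h + √h`. -/
theorem stmt_0 (h m n : ℕ) (hh : 0 < h) (hm : 0 < m) (y : Fin n → ℕ)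
    (hpack : ∃ f : Fin n → Fin m, ∀ j : Fin m,
      (∑ i : Fin n, if f i = j then y i else 0) ≤ h)
    (hsum : n + ∑ i : Fin n, y i < m * h) :
    ∃ f : Fin n → Fin m, ∀ j : Fin m,
      ((∑ i : Fin n, if f i = j then (y i + 1) else 0 : ℕ) : ℝ)
        ≤ (h : ℝ) + Real.sqrt h := by
  obtain ⟨f, hf⟩ := hpack
  set t := Nat.sqrt h with ht
  have key : ∀ k : ℕ, ∃ g : Fin n → Fin m,
      (∀ i, t + 1 ≤ y i → g i = f i) ∧
      ∀ j : Fin m,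
        (∑ i : Fin n, if (t + 1 ≤ y i ∨ i.val < k) ∧ g i = j then y i + 1 else 0) ≤ h + t ∨
        (∑ i : Fin n, if (t + 1 ≤ y i ∨ i.val < k) ∧ g i = j then y i + 1 else 0)
          = ∑ i : Fin n, if t + 1 ≤ y i ∧ f i = j then y i + 1 else 0 := by
    intro k
    induction k with
    | zero =>
      refine ⟨f, fun _ _ => rfl, fun j => Or.inr ?_⟩
      exact Finset.sum_congr rfl fun i _ => by simp
    | succ k ih =>
      obtain ⟨g, hga, hgb⟩ := ih
      by_cases hkn : k < n
      · set kk : Fin n := ⟨k, hkn⟩ with hkk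
        by_cases hbig : t + 1 ≤ y kk
        · refine ⟨g, hga, fun j => ?_⟩
          have heq : (∑ i : Fin n, if (t + 1 ≤ y i ∨ i.val < k + 1) ∧ g i = j then y i + 1 else 0)
              = ∑ i : Fin n, if (t + 1 ≤ y i ∨ i.val < k) ∧ g i = j then y i + 1 else 0 := by
            refine Finset.sum_congr rfl fun i _ => ?_
            refine if_congr ?_ rfl rfl
            by_cases hik : i = kk
            · subst hik; simp [hbig]
            · have hne : i.val ≠ k := fun hc => hik (Fin.ext hc)
              constructor <;> rintro ⟨h1, h2⟩ <;> exact ⟨by omega, h2⟩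
          rw [heq]; exact hgb j
        · -- kk is small
          have hsmall : y kk ≤ t := by omega
          -- total load bound
          have htot : (∑ j : Fin m, ∑ i : Fin n,
              if (t + 1 ≤ y i ∨ i.val < k) ∧ g i = j then y i + 1 else 0) < m * h := by
            calc ∑ j : Fin m, ∑ i : Fin n,
                  (if (t + 1 ≤ y i ∨ i.val < k) ∧ g i = j then y i + 1 else 0)
                = ∑ i : Fin n, ∑ j : Fin m,
                  (if (t + 1 ≤ y i ∨ i.val < k) ∧ g i = j then y i + 1 else 0) :=
                  Finset.sum_comm
              _ ≤ ∑ i : Fin n, (y i + 1) := by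
                  refine Finset.sum_le_sum fun i _ => ?_
                  by_cases hc : (t + 1 ≤ y i ∨ i.val < k)
                  · simp only [hc, true_and]; simp
                  · simp only [hc, false_and]; simp
              _ = (∑ i : Fin n, y i) + n := by
                  rw [Finset.sum_add_distrib, Finset.sum_const, Finset.card_univ,
                    Fintype.card_fin, smul_eq_mul, mul_one]
              _ < m * h := by omega
          have hex : ∃ j0 : Fin m, (∑ i : Fin n,
              if (t + 1 ≤ y i ∨ i.val < k) ∧ g i = j0 then y i + 1 else 0) < h := by
            by_contra hcon
            push_neg at hcon
            have hge : m * h ≤ ∑ j : Fin m, ∑ i : Fin n,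
                (if (t + 1 ≤ y i ∨ i.val < k) ∧ g i = j then y i + 1 else 0) := by
              calc m * h = ∑ _j : Fin m, h := by
                    rw [Finset.sum_const, Finset.card_univ, Fintype.card_fin, smul_eq_mul]
                _ ≤ _ := Finset.sum_le_sum fun j _ => hcon j
            omega
          obtain ⟨j0, hj0⟩ := hex
          refine ⟨Function.update g kk j0, ?_, ?_⟩
          · intro i hbi
            have hik : i ≠ kk := fun hc => by rw [hc] at hbi; omega
            rw [Function.update_of_ne hik]; exact hga i hbi
          · intro j
            have hstep : (∑ i : Fin n,
                if (t + 1 ≤ y i ∨ i.val < k + 1) ∧ Function.update g kk j0 i = j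
                  then y i + 1 else 0)
                = (∑ i : Fin n, if (t + 1 ≤ y i ∨ i.val < k) ∧ g i = j then y i + 1 else 0)
                  + (if j0 = j then y kk + 1 else 0) := by
              rw [← Finset.sum_erase_add _ _ (Finset.mem_univ kk),
                  ← Finset.sum_erase_add _ _ (Finset.mem_univ kk)]
              have e1 : (∑ i ∈ Finset.univ.erase kk,
                  if (t + 1 ≤ y i ∨ i.val < k + 1) ∧ Function.update g kk j0 i = j
                    then y i + 1 else 0)
                  = ∑ i ∈ Finset.univ.erase kk,
                    if (t + 1 ≤ y i ∨ i.val < k) ∧ g i = j then y i + 1 else 0 := by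
                refine Finset.sum_congr rfl fun i hi => ?_
                have hik : i ≠ kk := Finset.ne_of_mem_erase hi
                have hne : i.val ≠ k := fun hc => hik (Fin.ext hc)
                rw [Function.update_of_ne hik]
                refine if_congr ?_ rfl rfl
                constructor <;> rintro ⟨h1, h2⟩ <;> exact ⟨by omega, h2⟩
              have e2 : (if (t + 1 ≤ y kk ∨ kk.val < k + 1) ∧ Function.update g kk j0 kk = j
                  then y kk + 1 else 0) = (if j0 = j then y kk + 1 else 0) := by
                rw [Function.update_self]
                refine if_congr ?_ rfl rfl
                have : kk.val < k + 1 := by simp [hkk]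
                tauto
              have e3 : (if (t + 1 ≤ y kk ∨ kk.val < k) ∧ g kk = j then y kk + 1 else 0) = 0 := by
                have hv : kk.val = k := rfl
                have : ¬ ((t + 1 ≤ y kk ∨ kk.val < k) ∧ g kk = j) := by
                  rintro ⟨h1 | h1, _⟩
                  · exact hbig h1
                  · omega
                rw [if_neg this]
              rw [e1, e2, e3, add_zero]
            rw [hstep]
            by_cases hjj : j0 = j
            · subst hjj
              left
              rw [if_pos rfl]
              omega
            · rw [if_neg hjj, add_zero]
              exact hgb j
      · refine ⟨g, hga, fun j => ?_⟩
        have heq : (∑ i : Fin n, if (t + 1 ≤ y i ∨ i.val < k + 1) ∧ g i = j then y i + 1 else 0)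
            = ∑ i : Fin n, if (t + 1 ≤ y i ∨ i.val < k) ∧ g i = j then y i + 1 else 0 := by
          refine Finset.sum_congr rfl fun i _ => ?_
          refine if_congr ?_ rfl rfl
          have := i.isLt
          constructor <;> rintro ⟨h1, h2⟩ <;> exact ⟨by omega, h2⟩
        rw [heq]; exact hgb j
  obtain ⟨g, hga, hgb⟩ := key n
  refine ⟨g, fun j => ?_⟩
  have hLn : (∑ i : Fin n, if g i = j then y i + 1 else 0)
      = ∑ i : Fin n, if (t + 1 ≤ y i ∨ i.val < n) ∧ g i = j then y i + 1 else 0 := by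
    refine Finset.sum_congr rfl fun i _ => ?_
    refine if_congr ?_ rfl rfl
    have := i.isLt
    constructor
    · intro h2; exact ⟨Or.inr this, h2⟩
    · rintro ⟨_, h2⟩; exact h2
  have htR : (t : ℝ) ≤ Real.sqrt h := by
    have h0 : t ^ 2 ≤ h := Nat.sqrt_le' h
    have h1 : (t : ℝ) ^ 2 ≤ (h : ℝ) := by exact_mod_cast h0
    nlinarith [Real.sq_sqrt (by positivity : (0:ℝ) ≤ (h:ℝ)), Real.sqrt_nonneg (h:ℝ)]
  rcases hgb j with hc | hc
  · rw [hLn]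
    calc ((∑ i : Fin n, if (t + 1 ≤ y i ∨ i.val < n) ∧ g i = j then y i + 1 else 0 : ℕ) : ℝ)
        ≤ ((h + t : ℕ) : ℝ) := by exact_mod_cast hc
      _ ≤ (h : ℝ) + Real.sqrt h := by push_cast; linarith
  · rw [hLn, hc]
    -- bound the big-items-only load
    set c : ℕ := ∑ i : Fin n, if t + 1 ≤ y i ∧ f i = j then 1 else 0 with hcdef
    set S : ℕ := ∑ i : Fin n, if t + 1 ≤ y i ∧ f i = j then y i else 0 with hSdef
    have hBj : (∑ i : Fin n, if t + 1 ≤ y i ∧ f i = j then y i + 1 else 0) = S + c := by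
      rw [hSdef, hcdef, ← Finset.sum_add_distrib]
      refine Finset.sum_congr rfl fun i _ => ?_
      split_ifs <;> simp
    have hSh : S ≤ h := by
      refine le_trans ?_ (hf j)
      refine Finset.sum_le_sum fun i _ => ?_
      split_ifs with h1 h2
      · exact le_refl _
      · exact absurd h1.2 h2
      · exact Nat.zero_le _
      · exact le_refl _
    have hcS : c * (t + 1) ≤ S := by
      rw [hcdef, hSdef, Finset.sum_mul]
      refine Finset.sum_le_sum fun i _ => ?_
      split_ifs with h1
      · rw [one_mul]; exact h1.1
      · simp
    have hch : c * (t + 1) ≤ h := le_trans hcS hSh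
    have hsqlt : Real.sqrt h < (t : ℝ) + 1 := by
      have h0 : h < (t + 1) ^ 2 := Nat.lt_succ_sqrt' h
      have h1 : (h : ℝ) < ((t : ℝ) + 1) ^ 2 := by exact_mod_cast h0
      nlinarith [Real.sq_sqrt (by positivity : (0:ℝ) ≤ (h:ℝ)), Real.sqrt_nonneg (h:ℝ)]
    have hcsq : (c : ℝ) ≤ Real.sqrt h := by
      by_contra hcon
      push_neg at hcon
      have h1 : ((c : ℝ)) * ((t : ℝ) + 1) ≤ (h : ℝ) := by exact_mod_cast hch
      nlinarith [Real.sq_sqrt (by positivity : (0:ℝ) ≤ (h:ℝ)), Real.sqrt_nonneg (h:ℝ)]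
    have hSR : (S : ℝ) ≤ (h : ℝ) := by exact_mod_cast hSh
    push_cast [hBj]
    linarith
end

section
/- For the online bin stretching problem with m = 2 bins, no deterministic online algorithm achieves stretching factor strictly less than 4/3. Concretely: for any deterministic algorithm, the adversary strategy 'send two items of size 1/3; if both are in the same bin, send an item of size 2/3, and depending on the response possibly another of size 2/3; if they are in different bins, send an item of size 1' forces a bin of load at least 4/3, while all items sent fit into 2 unit bins. -/
/-- Loads of the 2 bins after an online algorithm `A` processes the item list `l`:
the algorithm sees, for the i-th item, the prefix of `l` of length `i+1` (whose
last element is the incoming item) and chooses a bin. -/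
noncomputable def onlineLoads (A : List ℝ → Fin 2) (l : List ℝ) (j : Fin 2) : ℝ :=
  ∑ i ∈ Finset.range l.length, if A (l.take (i + 1)) = j then l.getD i 0 else 0

lemma loads3 (A : List ℝ → Fin 2) (a b c : ℝ) (j : Fin 2) :
    onlineLoads A [a, b, c] j =
      (if A [a] = j then a else 0) + (if A [a, b] = j then b else 0) +
        (if A [a, b, c] = j then c else 0) := by
  simp [onlineLoads, Finset.sum_range_succ]

lemma loads4 (A : List ℝ → Fin 2) (a b c d : ℝ) (j : Fin 2) :
    onlineLoads A [a, b, c, d] j =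
      (if A [a] = j then a else 0) + (if A [a, b] = j then b else 0) +
        (if A [a, b, c] = j then c else 0) + (if A [a, b, c, d] = j then d else 0) := by
  simp [onlineLoads, Finset.sum_range_succ]

lemma fin2_ne_ne {x y z : Fin 2} (h1 : x ≠ z) (h2 : y ≠ z) : x = y := by
  omega

lemma fin2_or {x y z : Fin 2} (h : x ≠ y) : z = x ∨ z = y := by
  omega

/-- No deterministic online algorithm for bin stretching with 2 bins achieves a
stretching factor strictly below 4/3: for every algorithm there is an item
sequence fitting into 2 unit bins on which some bin reaches load ≥ 4/3. -/
theorem stmt_12 (A : List ℝ → Fin 2) :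
    ∃ I : List ℝ,
      (∀ x ∈ I, 0 < x) ∧
      (∃ f : Fin I.length → Fin 2, ∀ j : Fin 2,
        (∑ i, if f i = j then I.get i else 0) ≤ 1) ∧
      (∃ j : Fin 2, 4 / 3 ≤ onlineLoads A I j) := by
  by_cases h2 : A [1/3, 1/3] = A [1/3]
  · -- both small items in the same bin `A [1/3]`
    by_cases h3 : A [1/3, 1/3, 2/3] = A [1/3]
    · refine ⟨[1/3, 1/3, 2/3], by norm_num, ⟨![0, 1, 0], ?_⟩, A [1/3], ?_⟩
      · intro j
        fin_cases j <;> simp [Fin.sum_univ_succ] <;> norm_num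
      · rw [loads3, h2, h3]
        norm_num
    · by_cases h4 : A [1/3, 1/3, 2/3, 2/3] = A [1/3]
      · refine ⟨[1/3, 1/3, 2/3, 2/3], by norm_num, ⟨![0, 1, 0, 1], ?_⟩, A [1/3], ?_⟩
        · intro j
          fin_cases j <;> simp [Fin.sum_univ_succ] <;> norm_num
        · rw [loads4, h2, h4, if_neg h3]
          norm_num
      · refine ⟨[1/3, 1/3, 2/3, 2/3], by norm_num, ⟨![0, 1, 0, 1], ?_⟩,
          A [1/3, 1/3, 2/3], ?_⟩
        · intro j
          fin_cases j <;> simp [Fin.sum_univ_succ] <;> norm_num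
        · have h4' : A [1/3, 1/3, 2/3, 2/3] = A [1/3, 1/3, 2/3] := fin2_ne_ne h4 h3
          rw [loads4, h4', if_pos rfl]
          have : (if A [1/3] = A [1/3, 1/3, 2/3] then (1/3 : ℝ) else 0) +
              (if A [1/3, 1/3] = A [1/3, 1/3, 2/3] then (1/3 : ℝ) else 0) ≥ 0 := by
            positivity
          nlinarith [this]
  · -- small items in different bins; send an item of size 1
    refine ⟨[1/3, 1/3, 1], by norm_num, ⟨![0, 0, 1], ?_⟩, A [1/3, 1/3, 1], ?_⟩
    · intro j
      fin_cases j <;> simp [Fin.sum_univ_succ] <;> norm_num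
    · rw [loads3, if_pos rfl]
      rcases fin2_or (z := A [1/3, 1/3, 1]) h2 with h | h
    
      · rw [if_pos h.symm]
        have : (if A [1/3] = A [1/3, 1/3, 1] then (1/3:ℝ) else 0) ≥ 0 := by positivity
        nlinarith [this]
      · rw [if_pos h.symm]
        have : (if A [1/3, 1/3] = A [1/3, 1/3, 1] then (1/3:ℝ) else 0) ≥ 0 := by positivity
        nlinarith [this]
end
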